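/- arXiv:2501.12096 — 2 statements merged into one kernel-verified Lean document; each statement's English description precedes it below -/
import Mathlib

section
/- Let L be a finite pure 2-dimensional simplicial complex that is shellable. Then the 1-skeleton L^(1) of L, regarded as a simple graph, has a spanning tree G that is weakly K_3-saturated in L^(1). -/
/-- A finite abstract simplicial complex on vertex type `V`: a finite family of
nonempty finite sets closed under taking nonempty subsets. -/
structure SComplex (V : Type*) where
  faces : Finset (Finset V)
  nonempty_mem : ∀ σ ∈ faces, σ.Nonempty
  down_closed : ∀ σ ∈ faces, ∀ τ, τ ⊆ σ → τ.Nonempty → τ ∈ faces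

namespace SComplex

variable {V : Type*}

/-- A facet is an inclusion-maximal face. -/
def IsFacet (K : SComplex V) (σ : Finset V) : Prop :=
  σ ∈ K.faces ∧ ∀ τ ∈ K.faces, σ ⊆ τ → σ = τ

/-- `K` is pure `d`-dimensional: `K` is nonempty and all facets have dimension `d`
(i.e. cardinality `d + 1`). -/
def PureDim (K : SComplex V) (d : ℕ) : Prop :=
  K.faces.Nonempty ∧ ∀ σ, K.IsFacet σ → σ.card = d + 1

/-- The 1-skeleton of a complex, regarded as a simple graph on `V`. -/
def skel1 [DecidableEq V] (K : SComplex V) : SimpleGraph V where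
  Adj u v := u ≠ v ∧ ({u, v} : Finset V) ∈ K.faces
  symm := by
    constructor
    intro u v h
    exact ⟨h.1.symm, by rw [Finset.pair_comm]; exact h.2⟩
  loopless := ⟨fun u h => h.1 rfl⟩

/-- `K` is shellable (as a pure `d`-dimensional complex): its facets can be ordered
`θ₁, …, θₘ` so that for every `i ≥ 2` the complex `K[θᵢ] ∩ K[θ₁, …, θ_{i-1}]` is pure
and `(d-1)`-dimensional, i.e. it is nonempty and all of its facets have cardinality `d`. -/
def Shellable (K : SComplex V) (d : ℕ) : Prop :=
  ∃ l : List (Finset V), l.Nodup ∧ (∀ σ, σ ∈ l ↔ K.IsFacet σ) ∧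
    ∀ i : Fin l.length, 1 ≤ i.val →
      ((∃ σ : Finset V, σ.Nonempty ∧ σ ⊆ l.get i ∧
          ∃ j : Fin l.length, j < i ∧ σ ⊆ l.get j) ∧
       ∀ σ : Finset V,
         (σ.Nonempty ∧ σ ⊆ l.get i ∧ ∃ j : Fin l.length, j < i ∧ σ ⊆ l.get j) →
         (∀ τ : Finset V,
            (τ.Nonempty ∧ τ ⊆ l.get i ∧ ∃ j : Fin l.length, j < i ∧ τ ⊆ l.get j) →
            σ ⊆ τ → σ = τ) →
         σ.card = d)

/-- `K'` arises from `K` by an elementary collapse: there is a face `τ` of `K` contained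
in a single facet `σ` distinct from `τ`, and `K'` is obtained from `K` by removing all
faces containing `τ`. -/
def ElemCollapse (K K' : SComplex V) : Prop :=
  ∃ τ σ : Finset V, τ ∈ K.faces ∧ K.IsFacet σ ∧ τ ≠ σ ∧ τ ⊆ σ ∧
    (∀ ρ, K.IsFacet ρ → τ ⊆ ρ → ρ = σ) ∧
    (∀ ρ, ρ ∈ K'.faces ↔ ρ ∈ K.faces ∧ ¬ τ ⊆ ρ)

/-- `K` collapses to `L` via a finite sequence of elementary collapses. -/
def CollapsesTo (K L : SComplex V) : Prop :=
  Relation.ReflTransGen ElemCollapse K L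

/-- `K` is collapsible: it collapses to a complex consisting of a single vertex. -/
def Collapsible (K : SComplex V) : Prop :=
  ∃ L : SComplex V, K.CollapsesTo L ∧ ∃ v : V, L.faces = {{v}}

/-- The reduced Euler characteristic `χ̃(K) = (Σᵢ (-1)^i fᵢ(K)) - 1`. -/
def redEuler (K : SComplex V) : ℤ :=
  (∑ σ ∈ K.faces, (-1 : ℤ) ^ (σ.card + 1)) - 1

/-- `K` is flag: every (nonempty) set of vertices of `K` that are pairwise joined by
edges of `K` is a face of `K`. -/
def Flag [DecidableEq V] (K : SComplex V) : Prop :=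
  ∀ C : Finset V, C.Nonempty → (∀ a ∈ C, ({a} : Finset V) ∈ K.faces) →
    (∀ a ∈ C, ∀ b ∈ C, a ≠ b → ({a, b} : Finset V) ∈ K.faces) → C ∈ K.faces

/-- The barycentric subdivision of `K`: vertices are the (nonempty) faces of `K`, and
faces are the nonempty collections of faces of `K` that form a chain under inclusion. -/
noncomputable def sd [DecidableEq V] (K : SComplex V) : SComplex (Finset V) := by
  classical
  exact
  { faces := K.faces.powerset.filter
      (fun C => C.Nonempty ∧ ∀ a ∈ C, ∀ b ∈ C, a ⊆ b ∨ b ⊆ a)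
    nonempty_mem := fun C hC => (Finset.mem_filter.mp hC).2.1
    down_closed := by
      intro C hC D hDC hD
      rw [Finset.mem_filter, Finset.mem_powerset] at hC ⊢
      exact ⟨hDC.trans hC.1, hD, fun a ha b hb => hC.2.2 a (hDC ha) b (hDC hb)⟩ }

end SComplex

/-- `es` is a witnessing sequence that `G` is weakly `K₃`-saturated in `F`:
`G` is a spanning subgraph of `F`, `es` is an ordering of the edges of `F` not in `G`,
and adding them one by one, each added edge completes a copy of `K₃` containing it. -/
def WitnessesWeakK3Sat {V : Type*} (F G : SimpleGraph V) (es : List (Sym2 V)) : Prop :=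
  G ≤ F ∧ es.Nodup ∧ (∀ e, e ∈ es ↔ e ∈ F.edgeSet \ G.edgeSet) ∧
    ∀ i : Fin es.length, ∃ x y z : V,
      es.get i = s(x, y) ∧
      (G ⊔ SimpleGraph.fromEdgeSet {e | e ∈ es.take (i.val + 1)}).Adj x y ∧
      (G ⊔ SimpleGraph.fromEdgeSet {e | e ∈ es.take (i.val + 1)}).Adj y z ∧
      (G ⊔ SimpleGraph.fromEdgeSet {e | e ∈ es.take (i.val + 1)}).Adj z x

/-- `G` is weakly `K₃`-saturated in `F`. -/
def WeaklyK3Saturated {V : Type*} (F G : SimpleGraph V) : Prop :=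
  ∃ es : List (Sym2 V), WitnessesWeakK3Sat F G es

/-- The weak saturation number `wsat(F, K₃)`: the minimum number of edges of a graph
weakly `K₃`-saturated in `F`. -/
noncomputable def wsatK3 (V : Type*) [Fintype V] (F : SimpleGraph V) : ℕ :=
  sInf {n | ∃ G : SimpleGraph V, WeaklyK3Saturated F G ∧ G.edgeSet.ncard = n}


/-!
Build the tree along a shelling `θ₁, …, θₘ` of the triangles, keeping a tree on the vertices
seen so far from which all edges seen so far are obtained by closing triangles. For `k ≥ 2`,
`θₖ ∩ (θ₁ ∪ … ∪ θₖ₋₁)` is pure of dimension one, so `θₖ = {x, y, z}` with `xy` an old edge.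
If `z` is old, it lies on an old edge `xz` or `yz` of `θₖ`, and the remaining edge closes a
triangle. If `z` is new, the edge `yz` extends the tree to `z` and `xz` closes the triangle `xyz`.
-/

open SimpleGraph

namespace WitnessesWeakK3Sat

variable {V : Type*} {F G H : SimpleGraph V} {es : List (Sym2 V)}

theorem sup_fromEdgeSet_eq (h : WitnessesWeakK3Sat F G es) :
    G ⊔ fromEdgeSet {e | e ∈ es} = F := by
  obtain ⟨hle, -, hes, -⟩ := h
  ext u v
  simp only [sup_adj, fromEdgeSet_adj, Set.mem_ofPred_eq, hes, Set.mem_sdiff, mem_edgeSet]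
  refine ⟨fun h => h.elim (hle ·) (·.1.1), fun h => ?_⟩
  by_cases hG : G.Adj u v
  exacts [Or.inl hG, Or.inr ⟨⟨h, hG⟩, h.ne⟩]

theorem append_edge (h : WitnessesWeakK3Sat F G es) {u v w : V} (huv : ¬F.Adj u v)
    (hne : u ≠ v) (huw : F.Adj u w) (hwv : F.Adj w v) :
    WitnessesWeakK3Sat (F ⊔ edge u v) G (es ++ [s(u, v)]) := by
  have hF := h.sup_fromEdgeSet_eq
  obtain ⟨hle, hnd, hes, htri⟩ := h
  have hnew : s(u, v) ∉ es := fun h => huv ((hes _).1 h).1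
  refine ⟨hle.trans le_sup_left, hnd.append (List.nodup_singleton _) ?_, fun e => ?_, ?_⟩
  · simpa using hnew
  · rw [List.mem_append, List.mem_singleton, hes, edgeSet_sup, edgeSet_edge_of_ne hne]
    constructor
    · rintro (⟨hF, hG⟩ | rfl)
      · exact ⟨Or.inl hF, hG⟩
      · exact ⟨Or.inr rfl, fun hG => huv (hle hG)⟩
    · rintro ⟨hF | rfl, hG⟩
      exacts [Or.inl ⟨hF, hG⟩, Or.inr rfl]
  · rintro ⟨i, hi⟩
    simp only [List.get_eq_getElem]
    rw [List.length_append, List.length_singleton] at hi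
    rcases (Nat.lt_succ_iff.1 hi).lt_or_eq with hi | rfl
    · obtain ⟨x, y, z, hxy, htri⟩ := htri ⟨i, hi⟩
      refine ⟨x, y, z, by simpa [List.getElem_append_left hi] using hxy, ?_⟩
      rwa [List.take_append_of_le_length hi]
    · have htake : {e | e ∈ (es ++ [s(u, v)]).take (es.length + 1)} = {e | e ∈ es} ∪ {s(u, v)} := by
        rw [List.take_of_length_le (by simp)]
        ext; simp [or_comm]
      have hgraph : G ⊔ fromEdgeSet {e | e ∈ (es ++ [s(u, v)]).take (es.length + 1)} =
          F ⊔ edge u v := by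
        rw [htake, ← hF, sup_assoc]
        congr 1
        ext; simp only [sup_adj, fromEdgeSet_adj, edge_adj, Set.mem_ofPred_eq, Set.mem_union,
          Set.mem_singleton_iff, Sym2.eq_iff]; tauto
      refine ⟨u, v, w, by simp, ?_⟩
      rw [hgraph]
      exact ⟨Or.inr ((edge_adj ..).2 ⟨Or.inl ⟨rfl, rfl⟩, hne⟩), Or.inl hwv.symm, Or.inl huw.symm⟩

theorem sup_of_disjoint (h : WitnessesWeakK3Sat F G es) (hFH : Disjoint F H) :
    WitnessesWeakK3Sat (F ⊔ H) (G ⊔ H) es := by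
  obtain ⟨hle, hnd, hes, htri⟩ := h
  refine ⟨sup_le_sup_right hle H, hnd, fun e => ?_, fun i => ?_⟩
  · have hdisj : e ∈ F.edgeSet → e ∉ H.edgeSet := (Set.disjoint_left.1 (disjoint_edgeSet.2 hFH) ·)
    rw [hes, edgeSet_sup, edgeSet_sup, Set.mem_sdiff, Set.mem_sdiff, Set.mem_union, Set.mem_union]
    tauto
  · obtain ⟨x, y, z, hxy, h₁, h₂, h₃⟩ := htri i
    have hmono := sup_le_sup_right (le_sup_left : G ≤ G ⊔ H)
      (fromEdgeSet {e | e ∈ es.take (i.val + 1)})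
    exact ⟨x, y, z, hxy, hmono h₁, hmono h₂, hmono h₃⟩

end WitnessesWeakK3Sat

namespace WeaklyK3Saturated

variable {V : Type*} {F G H : SimpleGraph V}

theorem refl (G : SimpleGraph V) : WeaklyK3Saturated G G :=
  ⟨[], le_rfl, List.nodup_nil, by simp, fun i => i.elim0⟩

theorem le (h : WeaklyK3Saturated F G) : G ≤ F :=
  h.elim fun _ hes => hes.1

theorem sup_edge (h : WeaklyK3Saturated F G) {u v w : V} (huw : F.Adj u w) (hwv : F.Adj w v) :
    WeaklyK3Saturated (F ⊔ edge u v) G := by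
  by_cases huv : F.Adj u v
  · rwa [sup_edge_of_adj F huv]
  by_cases hne : u = v
  · rwa [hne, sup_edge_self]
  obtain ⟨es, hes⟩ := h
  exact ⟨_, hes.append_edge huv hne huw hwv⟩

theorem sup_of_disjoint (h : WeaklyK3Saturated F G) (hFH : Disjoint F H) :
    WeaklyK3Saturated (F ⊔ H) (G ⊔ H) :=
  h.elim fun es hes => ⟨es, hes.sup_of_disjoint hFH⟩

end WeaklyK3Saturated

structure IsK3SaturatingTree {V : Type*} (F : SimpleGraph V) (S : Set V) (T : SimpleGraph V) :
    Prop where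
  isAcyclic : T.IsAcyclic
  reachable : ∀ u ∈ S, ∀ v ∈ S, T.Reachable u v
  support_subset : F.support ⊆ S
  weaklyK3Saturated : WeaklyK3Saturated F T

namespace IsK3SaturatingTree

variable {V : Type*} {F T : SimpleGraph V} {S : Set V} {u v w : V}

theorem bot : IsK3SaturatingTree (⊥ : SimpleGraph V) ∅ ⊥ :=
  ⟨isAcyclic_bot, by simp, by simp [support_bot], .refl ⊥⟩

theorem singleton (x : V) : IsK3SaturatingTree (⊥ : SimpleGraph V) {x} ⊥ :=
  ⟨isAcyclic_bot, by simp, by simp [support_bot], .refl ⊥⟩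

theorem mem_of_adj (h : IsK3SaturatingTree F S T) (huv : F.Adj u v) : u ∈ S :=
  h.support_subset ⟨v, huv⟩

theorem sup_edge_of_adj (h : IsK3SaturatingTree F S T) (huw : F.Adj u w) (hwv : F.Adj w v) :
    IsK3SaturatingTree (F ⊔ edge u v) S T := by
  refine ⟨h.isAcyclic, h.reachable, ?_, h.weaklyK3Saturated.sup_edge huw hwv⟩
  rintro a ⟨b, hab | hab⟩
  · exact h.mem_of_adj hab
  · rcases ((edge_adj ..).1 hab).1 with ⟨rfl, -⟩ | ⟨rfl, -⟩
    exacts [h.mem_of_adj huw, h.mem_of_adj hwv.symm]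

theorem sup_edge_of_notMem (h : IsK3SaturatingTree F S T) (hu : u ∈ S) (hv : v ∉ S) :
    IsK3SaturatingTree (F ⊔ edge u v) (insert v S) (T ⊔ edge u v) := by
  have hFv : v ∉ F.support := (hv <| h.support_subset ·)
  have hTv : v ∉ T.support := (hFv <| support_mono h.weaklyK3Saturated.le ·)
  have huv : u ≠ v := by rintro rfl; exact hv hu
  have hreach : ∀ a ∈ S, (T ⊔ edge u v).Reachable a v := fun a ha =>
    ((h.reachable a ha u hu).mono le_sup_left).trans
      (Adj.reachable (Or.inr ((edge_adj ..).2 ⟨Or.inl ⟨rfl, rfl⟩, huv⟩)))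
  refine ⟨h.isAcyclic.sup_edge_of_not_reachable
    fun huv' => hTv (mem_support_of_reachable huv.symm huv'.symm), ?_, ?_, ?_⟩
  · rintro a (rfl | ha) b (rfl | hb)
    exacts [.rfl, (hreach b hb).symm, hreach a ha, (h.reachable a ha b hb).mono le_sup_left]
  · rintro a ⟨b, hab | hab⟩
    · exact Set.mem_insert_of_mem _ (h.mem_of_adj hab)
    · rcases ((edge_adj ..).1 hab).1 with ⟨rfl, -⟩ | ⟨rfl, -⟩
      exacts [Set.mem_insert_of_mem _ hu, Set.mem_insert _ _]
  · exact h.weaklyK3Saturated.sup_of_disjoint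
      ((disjoint_edge F).2 fun huv' => hFv ⟨u, huv'.symm⟩)

theorem exists_sup_triangle [DecidableEq V] (h : IsK3SaturatingTree F S T) {x y z : V}
    (hxy : F.Adj x y) (hz : F.Adj x z ∨ z ∉ S) :
    ∃ T', IsK3SaturatingTree (F ⊔ edge x y ⊔ edge x z ⊔ edge y z) (S ∪ {x, y, z}) T' := by
  have hx := h.mem_of_adj hxy
  have hy := h.mem_of_adj hxy.symm
  rw [SimpleGraph.sup_edge_of_adj F hxy]
  rcases hz with hxz | hz
  · have hS : S ∪ {x, y, z} = S := by
      simp [hx, hy, h.mem_of_adj hxz.symm]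
    rw [SimpleGraph.sup_edge_of_adj F hxz, hS]
    exact ⟨T, h.sup_edge_of_adj hxy.symm hxz⟩
  · have hyz : y ≠ z := by rintro rfl; exact hz hy
    have h' := (h.sup_edge_of_notMem hy hz).sup_edge_of_adj (u := x) (w := y) (v := z)
      (Or.inl hxy) (Or.inr ((edge_adj ..).2 ⟨Or.inl ⟨rfl, rfl⟩, hyz⟩))
    have hS : S ∪ {x, y, z} = insert z S := by
      ext a; simp only [Set.mem_union, Set.mem_insert_iff, Set.mem_singleton_iff]; grind
    rw [sup_right_comm, hS]
    exact ⟨_, h'⟩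

theorem exists_triangle [DecidableEq V] {x y z : V} (hxy : x ≠ y) (hxz : x ≠ z) (hyz : y ≠ z) :
    ∃ T, IsK3SaturatingTree (edge x y ⊔ edge x z ⊔ edge y z) {x, y, z} T := by
  have h := (singleton x).sup_edge_of_notMem (v := y) rfl hxy.symm
  rw [bot_sup_eq] at h
  obtain ⟨T, hT⟩ := h.exists_sup_triangle (z := z) ((edge_adj ..).2 ⟨Or.inl ⟨rfl, rfl⟩, hxy⟩)
    (Or.inr (by simp [hxz.symm, hyz.symm]))
  refine ⟨T, ?_⟩
  rwa [sup_idem, Set.union_eq_right.2 (by simp [Set.insert_subset_iff])] at hT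

end IsK3SaturatingTree

section Facets

variable {V : Type*}

def facetGraph (P : List (Finset V)) : SimpleGraph V where
  Adj u v := u ≠ v ∧ ∃ θ ∈ P, u ∈ θ ∧ v ∈ θ
  symm := ⟨fun _ _ ⟨hne, θ, hθ, hu, hv⟩ => ⟨hne.symm, θ, hθ, hv, hu⟩⟩
  loopless := ⟨fun _ h => h.1 rfl⟩

def facetVerts (P : List (Finset V)) : Set V := {v | ∃ θ ∈ P, v ∈ θ}

@[simp]
theorem facetGraph_nil : facetGraph ([] : List (Finset V)) = ⊥ := by
  ext; simp [facetGraph]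

@[simp]
theorem facetVerts_nil : facetVerts ([] : List (Finset V)) = ∅ := by
  simp [facetVerts]

theorem facetVerts_append_singleton (P : List (Finset V)) (θ : Finset V) :
    facetVerts (P ++ [θ]) = facetVerts P ∪ θ := by
  ext; simp [facetVerts, or_and_right, exists_or]

theorem facetGraph_append_triple [DecidableEq V] (P : List (Finset V)) (x y z : V) :
    facetGraph (P ++ [{x, y, z}]) = facetGraph P ⊔ edge x y ⊔ edge x z ⊔ edge y z := by
  ext a b
  simp only [facetGraph, List.mem_append, List.mem_singleton, sup_adj, edge_adj, or_and_right,
    exists_or, exists_eq_left, Finset.mem_insert, Finset.mem_singleton]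
  grind

-- `σ` is a face of `K[θ] ∩ K[P]`, in the notation of the shelling condition.
def IsCommonFace (P : List (Finset V)) (θ σ : Finset V) : Prop :=
  σ.Nonempty ∧ σ ⊆ θ ∧ ∃ θ' ∈ P, σ ⊆ θ'

def IsShellingStep (d : ℕ) (P : List (Finset V)) (θ : Finset V) : Prop :=
  (∃ σ, IsCommonFace P θ σ) ∧ ∀ σ, Maximal (IsCommonFace P θ) σ → σ.card = d

def IsShelling (d : ℕ) (l : List (Finset V)) : Prop :=
  ∀ k (hk : k < l.length), 1 ≤ k → IsShellingStep d (l.take k) l[k]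

variable [DecidableEq V] {P : List (Finset V)} {θ σ : Finset V}

theorem exists_adj_of_isCommonFace (hmax : ∀ σ, Maximal (IsCommonFace P θ) σ → σ.card = 2)
    (hσ : IsCommonFace P θ σ) :
    ∃ a b, σ ⊆ {a, b} ∧ a ∈ θ ∧ b ∈ θ ∧ (facetGraph P).Adj a b := by
  have hfin : {τ | IsCommonFace P θ τ}.Finite :=
    θ.powerset.finite_toSet.subset fun τ hτ => Finset.mem_powerset.2 hτ.2.1
  obtain ⟨τ, hστ, hτ⟩ := hfin.exists_le_maximal hσ
  obtain ⟨a, b, hab, rfl⟩ := Finset.card_eq_two.1 (hmax τ hτ)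
  obtain ⟨-, hτθ, θ', hθ', hτθ'⟩ := hτ.prop
  have ha : a ∈ ({a, b} : Finset V) := Finset.mem_insert_self a {b}
  have hb : b ∈ ({a, b} : Finset V) := Finset.mem_insert_of_mem (Finset.mem_singleton_self b)
  exact ⟨a, b, hστ, hτθ ha, hτθ hb, hab, θ', hθ', hτθ' ha, hτθ' hb⟩

theorem IsShellingStep.exists_triangle (h : IsShellingStep 2 P θ) (hθ : θ.card = 3) :
    ∃ x y z, θ = {x, y, z} ∧ (facetGraph P).Adj x y ∧
      ((facetGraph P).Adj x z ∨ z ∉ facetVerts P) := by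
  obtain ⟨⟨σ, hσ⟩, hmax⟩ := h
  obtain ⟨x, y, -, hx, hy, hxy⟩ := exists_adj_of_isCommonFace hmax hσ
  obtain ⟨z, hz, hzxy⟩ := Finset.exists_of_ssubset (s₁ := {x, y}) (s₂ := θ)
    (Finset.ssubset_iff_subset_ne.2 ⟨by simp [Finset.insert_subset_iff, hx, hy], by
      rintro rfl; simp [Finset.card_pair hxy.1] at hθ⟩)
  have ⟨hzx, hzy⟩ : z ≠ x ∧ z ≠ y := by simpa [not_or] using hzxy
  have hθ : θ = {x, y, z} := by
    refine (Finset.eq_of_subset_of_card_le (by simp [Finset.insert_subset_iff, hx, hy, hz]) ?_).symm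
    rw [hθ, Finset.card_eq_three.2 ⟨x, y, z, hxy.ne, hzx.symm, hzy.symm, rfl⟩]
  by_cases hzP : z ∈ facetVerts P
  · obtain ⟨θ', hθ', hzθ'⟩ := hzP
    obtain ⟨a, b, hzab, ha, hb, hab⟩ := exists_adj_of_isCommonFace hmax (σ := {z})
      ⟨Finset.singleton_nonempty z, by simpa using hz, θ', hθ', by simpa using hzθ'⟩
    have hzw : ∃ w, (w = x ∨ w = y) ∧ (facetGraph P).Adj w z := by
      rw [hθ] at ha hb
      replace hzab := hzab (Finset.mem_singleton_self z)
      simp only [Finset.mem_insert, Finset.mem_singleton] at ha hb hzab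
      rcases hzab with rfl | rfl
      · rcases hb with rfl | rfl | rfl
        exacts [⟨_, Or.inl rfl, hab.symm⟩, ⟨_, Or.inr rfl, hab.symm⟩, (hab.ne rfl).elim]
      · rcases ha with rfl | rfl | rfl
        exacts [⟨_, Or.inl rfl, hab⟩, ⟨_, Or.inr rfl, hab⟩, (hab.ne rfl).elim]
    obtain ⟨w, rfl | rfl, hwz⟩ := hzw
    · exact ⟨w, y, z, hθ, hxy, Or.inl hwz⟩
    · exact ⟨w, x, z, by rw [hθ, Finset.insert_comm], hxy.symm, Or.inl hwz⟩
  · exact ⟨x, y, z, hθ, hxy, Or.inr hzP⟩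

theorem IsShelling.exists_isK3SaturatingTree {l : List (Finset V)} (hl : IsShelling 2 l)
    (hcard : ∀ θ ∈ l, θ.card = 3) :
    ∃ T, IsK3SaturatingTree (facetGraph l) (facetVerts l) T := by
  suffices ∀ k ≤ l.length,
      ∃ T, IsK3SaturatingTree (facetGraph (l.take k)) (facetVerts (l.take k)) T by
    simpa using this l.length le_rfl
  intro k hk
  induction k with
  | zero => exact ⟨⊥, by simpa using IsK3SaturatingTree.bot⟩
  | succ k ih =>
    have hk' : k < l.length := by omega
    have hcardk := hcard _ (List.getElem_mem hk')
    rw [List.take_succ_eq_append_getElem hk', facetVerts_append_singleton]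
    rcases Nat.eq_zero_or_pos k with rfl | hk1
    · obtain ⟨x, y, z, hxy, hxz, hyz, hθ⟩ := Finset.card_eq_three.1 hcardk
      rw [hθ, facetGraph_append_triple, List.take_zero, facetGraph_nil, facetVerts_nil, bot_sup_eq,
        Set.empty_union]
      push_cast
      exact IsK3SaturatingTree.exists_triangle hxy hxz hyz
    · obtain ⟨T, hT⟩ := ih hk'.le
      obtain ⟨x, y, z, hθ, hxy, hz⟩ := (hl k hk' hk1).exists_triangle hcardk
      rw [hθ, facetGraph_append_triple]
      push_cast
      exact hT.exists_sup_triangle hxy hz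

end Facets

namespace SComplex

variable {V : Type*} {K : SComplex V} {l : List (Finset V)}

theorem exists_isFacet_superset {σ : Finset V} (hσ : σ ∈ K.faces) : ∃ ρ, K.IsFacet ρ ∧ σ ⊆ ρ := by
  have hfin : {τ | τ ∈ K.faces ∧ σ ⊆ τ}.Finite := K.faces.finite_toSet.subset fun _ hτ => hτ.1
  obtain ⟨ρ, hσρ, hρ⟩ := hfin.exists_le_maximal ⟨hσ, subset_rfl⟩
  exact ⟨ρ, ⟨hρ.prop.1, fun τ hτ hρτ => hρτ.antisymm (hρ.2 ⟨hτ, hσρ.trans hρτ⟩ hρτ)⟩, hσρ⟩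

theorem Shellable.exists_isShelling {d : ℕ} (h : K.Shellable d) :
    ∃ l : List (Finset V), (∀ σ, σ ∈ l ↔ K.IsFacet σ) ∧ IsShelling d l := by
  obtain ⟨l, -, hfacets, hshell⟩ := h
  refine ⟨l, hfacets, fun k hk hk1 => ?_⟩
  have hearlier : ∀ σ,
      (∃ j < (⟨k, hk⟩ : Fin l.length), σ ⊆ l[(j : ℕ)]) ↔ ∃ θ ∈ l.take k, σ ⊆ θ := by
    intro σ
    simp only [List.mem_take_iff_getElem, Fin.lt_def]
    exact ⟨fun ⟨j, hj, hσ⟩ => ⟨_, ⟨j, by omega, rfl⟩, hσ⟩,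
      fun ⟨_, ⟨j, hj, rfl⟩, hσ⟩ => ⟨⟨j, by omega⟩, by simp only; omega, hσ⟩⟩
  obtain ⟨hne, hmax⟩ := hshell ⟨k, hk⟩ hk1
  simp only [List.get_eq_getElem, hearlier] at hne hmax
  exact ⟨hne, fun σ hσ => hmax σ hσ.prop fun τ hτ hστ => hστ.antisymm (hσ.2 hτ hστ)⟩

theorem facetVerts_eq_univ (hl : ∀ σ, σ ∈ l ↔ K.IsFacet σ)
    (hvert : ∀ v : V, ({v} : Finset V) ∈ K.faces) : facetVerts l = Set.univ := by
  refine Set.eq_univ_of_forall fun v => ?_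
  obtain ⟨ρ, hρ, hvρ⟩ := exists_isFacet_superset (hvert v)
  exact ⟨ρ, (hl ρ).2 hρ, by simpa using hvρ⟩

theorem facetGraph_eq_skel1 [DecidableEq V] (hl : ∀ σ, σ ∈ l ↔ K.IsFacet σ) :
    facetGraph l = K.skel1 := by
  ext u v
  refine ⟨fun ⟨huv, θ, hθ, hu, hv⟩ => ⟨huv, ?_⟩, fun ⟨huv, huvK⟩ => ?_⟩
  · exact K.down_closed θ ((hl θ).1 hθ).1 _ (by simp [Finset.insert_subset_iff, hu, hv])
      (Finset.insert_nonempty _ _)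
  · obtain ⟨ρ, hρ, huvρ⟩ := exists_isFacet_superset huvK
    exact ⟨huv, ρ, (hl ρ).2 hρ, huvρ (by simp), huvρ (by simp)⟩

end SComplex

theorem exists_spanning_tree_weaklyK3Saturated_general {V : Type*} [DecidableEq V]
    (L : SComplex V) (hvert : ∀ v : V, ({v} : Finset V) ∈ L.faces)
    (hpure : L.PureDim 2) (hshell : L.Shellable 2) :
    ∃ G : SimpleGraph V, G ≤ L.skel1 ∧ G.IsTree ∧ WeaklyK3Saturated L.skel1 G := by
  obtain ⟨l, hfacets, hl⟩ := hshell.exists_isShelling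
  obtain ⟨T, hT⟩ := hl.exists_isK3SaturatingTree fun θ hθ => hpure.2 θ ((hfacets θ).1 hθ)
  rw [SComplex.facetGraph_eq_skel1 hfacets, SComplex.facetVerts_eq_univ hfacets hvert] at hT
  obtain ⟨σ, hσ⟩ := hpure.1
  obtain ⟨v, -⟩ := L.nonempty_mem σ hσ
  have : Nonempty V := ⟨v⟩
  exact ⟨T, hT.weaklyK3Saturated.le,
    ⟨⟨fun u w => hT.reachable u trivial w trivial⟩, hT.isAcyclic⟩, hT.weaklyK3Saturated⟩

/-- A finite pure 2-dimensional shellable simplicial complex has a spanning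
tree of its 1-skeleton that is weakly `K₃`-saturated in the 1-skeleton. -/
theorem exists_spanning_tree_weaklyK3Saturated {V : Type*} [Fintype V] [DecidableEq V]
    (L : SComplex V) (hvert : ∀ v : V, ({v} : Finset V) ∈ L.faces)
    (hpure : L.PureDim 2) (hshell : L.Shellable 2) :
    ∃ G : SimpleGraph V, G ≤ L.skel1 ∧ G.IsTree ∧ WeaklyK3Saturated L.skel1 G :=
  exists_spanning_tree_weaklyK3Saturated_general L hvert hpure hshell
end

section
/- Let L be a finite pure 2-dimensional flag simplicial complex, let G be a spanning tree of the 1-skeleton L^(1) that is weakly K_3-saturated in L^(1) with witnessing edge sequence e_1,…,e_m, and for each i let J_i be a copy of K_3 containing e_i created at step i, with θ_i the 2-dimensional face of L induced by the vertex set of J_i. Then the faces θ_1,…,θ_m are pairwise distinct, and the subcomplex of L consisting of all vertices and edges of L together with the faces θ_1,…,θ_m collapses to G. -/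
/-!
All three edges of `θ j` are present once `e_j` has been added, so `e_i ⊆ θ j` forces `i ≤ j`;
since `e_i ⊆ θ i`, the `θ i` are distinct. For the same reason `e_i` is a free face of `θ i`
once `θ_m, …, θ_{i+1}` have been removed, so collapsing `θ_m, …, θ_1` through `e_m, …, e_1`
leaves exactly the vertices and the edges of `G`.
-/

namespace SComplex

variable {V : Type*}

def skeleton (K : SComplex V) (d : ℕ) : SComplex V where
  faces := K.faces.filter (·.card ≤ d + 1)
  nonempty_mem σ hσ := K.nonempty_mem σ (Finset.mem_filter.1 hσ).1
  down_closed σ hσ τ hτσ hτ := Finset.mem_filter.2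
    ⟨K.down_closed σ (Finset.mem_filter.1 hσ).1 τ hτσ hτ,
      (Finset.card_le_card hτσ).trans (Finset.mem_filter.1 hσ).2⟩

@[simp]
theorem mem_skeleton {K : SComplex V} {d : ℕ} {ρ : Finset V} :
    ρ ∈ (K.skeleton d).faces ↔ ρ ∈ K.faces ∧ ρ.card ≤ d + 1 :=
  Finset.mem_filter

def addFaces [DecidableEq V] (K : SComplex V) (S : Finset (Finset V))
    (hS : ∀ σ ∈ S, σ.Nonempty ∧ ∀ τ ⊂ σ, τ.Nonempty → τ ∈ K.faces) : SComplex V where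
  faces := K.faces ∪ S
  nonempty_mem σ hσ := (Finset.mem_union.1 hσ).elim (K.nonempty_mem σ) fun h => (hS σ h).1
  down_closed σ hσ τ hτσ hτ := by
    rcases Finset.mem_union.1 hσ with hσK | hσS
    · exact Finset.mem_union_left _ (K.down_closed σ hσK τ hτσ hτ)
    · rcases hτσ.eq_or_ssubset with rfl | hτσ
      · exact Finset.mem_union_right _ hσS
      · exact Finset.mem_union_left _ ((hS σ hσS).2 τ hτσ hτ)

@[simp]
theorem mem_addFaces [DecidableEq V] {K : SComplex V} {S : Finset (Finset V)}
    {hS : ∀ σ ∈ S, σ.Nonempty ∧ ∀ τ ⊂ σ, τ.Nonempty → τ ∈ K.faces} {ρ : Finset V} :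
    ρ ∈ (K.addFaces S hS).faces ↔ ρ ∈ K.faces ∨ ρ ∈ S :=
  Finset.mem_union

noncomputable def deletion (K : SComplex V) (T : Set (Finset V)) : SComplex V := by
  classical
  exact
  { faces := K.faces.filter fun ρ => ∀ τ ∈ T, ¬τ ⊆ ρ
    nonempty_mem := fun σ hσ => K.nonempty_mem σ (Finset.mem_filter.1 hσ).1
    down_closed := fun σ hσ τ hτσ hτ => Finset.mem_filter.2
      ⟨K.down_closed σ (Finset.mem_filter.1 hσ).1 τ hτσ hτ,
        fun υ hυ hυτ => (Finset.mem_filter.1 hσ).2 υ hυ (hυτ.trans hτσ)⟩ }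

@[simp]
theorem mem_deletion {K : SComplex V} {T : Set (Finset V)} {ρ : Finset V} :
    ρ ∈ (K.deletion T).faces ↔ ρ ∈ K.faces ∧ ∀ τ ∈ T, ¬τ ⊆ ρ := by
  classical
  simp [deletion]

theorem deletion_empty (K : SComplex V) : K.deletion ∅ = K := by
  cases K
  simp [deletion]

theorem elemCollapse_of_free {K K' : SComplex V} {τ σ : Finset V} (hτ : τ.Nonempty)
    (hτσ : τ ⊂ σ) (hσ : σ ∈ K.faces) (hfree : ∀ ρ ∈ K.faces, τ ⊆ ρ → ρ = τ ∨ ρ = σ)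
    (hK' : ∀ ρ, ρ ∈ K'.faces ↔ ρ ∈ K.faces ∧ ¬τ ⊆ ρ) : ElemCollapse K K' := by
  have hσ_facet : K.IsFacet σ := ⟨hσ, fun ρ hρ hσρ =>
    ((hfree ρ hρ (hτσ.subset.trans hσρ)).resolve_left fun h =>
      hτσ.not_subset (h ▸ hσρ)).symm⟩
  refine ⟨τ, σ, K.down_closed σ hσ τ hτσ.subset hτ, hσ_facet, hτσ.ne, hτσ.subset,
    fun ρ hρ hτρ => ?_, hK'⟩
  refine (hfree ρ hρ.1 hτρ).resolve_left ?_
  rintro rfl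
  exact hτσ.ne (hρ.2 σ hσ hτσ.subset)

theorem collapsesTo_deletion_range {M : SComplex V} {n : ℕ} (τ θ : Fin n → Finset V)
    (hτ : ∀ j, (τ j).Nonempty) (hτθ : ∀ j, τ j ⊂ θ j) (hθ : ∀ j, θ j ∈ M.faces)
    (hord : ∀ i j, τ j ⊆ θ i → j ≤ i)
    (hstar : ∀ j, ∀ ρ ∈ M.faces, τ j ⊆ ρ → ρ = τ j ∨ ∃ i, ρ = θ i) :
    M.CollapsesTo (M.deletion (Set.range τ)) := by
  let K : ℕ → SComplex V := fun k => M.deletion (τ '' {j | k ≤ j})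
  have hK : ∀ k ρ, ρ ∈ (K k).faces ↔ ρ ∈ M.faces ∧ ∀ j : Fin n, k ≤ j → ¬τ j ⊆ ρ := by
    intro k ρ
    simp [K]
  have hstep : ∀ k (hk : k < n), ElemCollapse (K (k + 1)) (K k) := by
    intro k hk
    let j₀ : Fin n := ⟨k, hk⟩
    have hθ₀ : θ j₀ ∈ (K (k + 1)).faces :=
      (hK _ _).2 ⟨hθ j₀, fun j hj hsub => by have : (j : ℕ) ≤ k := hord j₀ j hsub; omega⟩
    refine elemCollapse_of_free (hτ j₀) (hτθ j₀) hθ₀ (fun ρ hρ hτρ => ?_) (fun ρ => ?_)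
    · rw [hK] at hρ
      rcases hstar j₀ ρ hρ.1 hτρ with h | ⟨i, rfl⟩
      · exact Or.inl h
      · have h₁ : (i : ℕ) < k + 1 := not_le.1 fun h => hρ.2 i h (hτθ i).subset
        have h₂ : k ≤ (i : ℕ) := hord i j₀ hτρ
        obtain rfl : i = j₀ := Fin.ext (by simp only [j₀]; omega)
        exact Or.inr rfl
    · simp only [hK]
      constructor
      · rintro ⟨hρ, h⟩
        exact ⟨⟨hρ, fun j hj => h j (by omega)⟩, h j₀ le_rfl⟩
      · rintro ⟨⟨hρ, h⟩, h₀⟩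
        refine ⟨hρ, fun j hj => ?_⟩
        rcases hj.eq_or_lt with hj | hj
        · obtain rfl : j = j₀ := Fin.ext hj.symm
          exact h₀
        · exact h j hj
  have hKn : K n = M := by
    convert M.deletion_empty
    ext σ
    simp
  have hK0 : K 0 = M.deletion (Set.range τ) := by
    simp [K]
  have hchain : (K n).CollapsesTo (K 0) :=
    (reflTransGen_of_succ_of_ge (fun a b => ElemCollapse (K a) (K b))
      (fun k hk => hstep k hk.2) (Nat.zero_le n)).lift K fun _ _ h => h
  rwa [hKn, hK0] at hchain

theorem _root_.SimpleGraph.exists_eq_singleton_or_adj_iff [DecidableEq V] {G : SimpleGraph V}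
    {s : Finset V} : ((∃ v, s = {v}) ∨ ∃ u v, G.Adj u v ∧ s = {u, v}) ↔
      s.Nonempty ∧ s.card ≤ 2 ∧ G.IsClique (s : Set V) := by
  constructor
  · rintro (⟨v, rfl⟩ | ⟨u, v, huv, rfl⟩)
    · simp
    · exact ⟨by simp, Finset.card_le_two, by simpa using SimpleGraph.isClique_pair.2 fun _ => huv⟩
  · rintro ⟨hs, hcard, hc⟩
    obtain hcard | hcard : s.card = 1 ∨ s.card = 2 := by have := hs.card_pos; omega
    · exact Or.inl (Finset.card_eq_one.1 hcard)
    · obtain ⟨a, b, hab, rfl⟩ := Finset.card_eq_two.1 hcard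
      exact Or.inr ⟨a, b, hc (by simp) (by simp) hab, rfl⟩

theorem mem_faces_of_isClique [DecidableEq V] {K : SComplex V}
    (hvert : ∀ v : V, ({v} : Finset V) ∈ K.faces) {s : Finset V} (hs : s.Nonempty)
    (hcard : s.card ≤ 2) (hc : K.skel1.IsClique (s : Set V)) : s ∈ K.faces := by
  rcases SimpleGraph.exists_eq_singleton_or_adj_iff.2 ⟨hs, hcard, hc⟩ with
    ⟨v, rfl⟩ | ⟨u, v, huv, rfl⟩
  · exact hvert v
  · exact huv.2

theorem exists_faces_iff_skeleton_one_or_eq [DecidableEq V] {ι : Type*} [Fintype ι]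
    {K : SComplex V} (hvert : ∀ v : V, ({v} : Finset V) ∈ K.faces) (θ : ι → Finset V)
    (hθ : ∀ i, (θ i).Nonempty ∧ (θ i).card ≤ 3 ∧ K.skel1.IsClique (θ i : Set V)) :
    ∃ M : SComplex V, ∀ ρ, ρ ∈ M.faces ↔ (ρ ∈ K.faces ∧ ρ.card ≤ 2) ∨ ∃ i, ρ = θ i := by
  have hS : ∀ σ ∈ Finset.univ.image θ,
      σ.Nonempty ∧ ∀ τ ⊂ σ, τ.Nonempty → τ ∈ (K.skeleton 1).faces := by
    simp only [Finset.mem_image, Finset.mem_univ, true_and, forall_exists_index]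
    rintro _ i rfl
    obtain ⟨hne, hcard, hc⟩ := hθ i
    refine ⟨hne, fun τ hτ hτne => ?_⟩
    have hτcard : τ.card ≤ 2 := by have := Finset.card_lt_card hτ; omega
    exact mem_skeleton.2 ⟨mem_faces_of_isClique hvert hτne hτcard
      (hc.subset (Finset.coe_subset.2 hτ.subset)), hτcard⟩
  exact ⟨(K.skeleton 1).addFaces _ hS, by simp [eq_comm]⟩

end SComplex

theorem Finset.pair_ssubset_triple {α : Type*} [DecidableEq α] {a b c : α} (hca : c ≠ a)
    (hcb : c ≠ b) : ({a, b} : Finset α) ⊂ {a, b, c} := by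
  rw [Finset.ssubset_iff_of_subset (by simp [Finset.insert_subset_iff])]
  exact ⟨c, by simp, by simp [hca, hcb]⟩

theorem List.Nodup.get_mem_take_iff {α : Type*} {l : List α} (h : l.Nodup) (i : Fin l.length)
    {n : ℕ} : l.get i ∈ l.take n ↔ (i : ℕ) < n := by
  classical
  rw [List.mem_take_iff_idxOf_lt (List.get_mem l i)]
  simp [h.idxOf_getElem]

def saturationStage {V : Type*} (G : SimpleGraph V) (es : List (Sym2 V)) (k : ℕ) :
    SimpleGraph V :=
  G ⊔ SimpleGraph.fromEdgeSet {e | e ∈ es.take k}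

section SaturationStage

variable {V : Type*} {G : SimpleGraph V} {es : List (Sym2 V)}

theorem saturationStage_le {F : SimpleGraph V} (hGF : G ≤ F) (hes : ∀ e ∈ es, e ∈ F.edgeSet)
    (k : ℕ) : saturationStage G es k ≤ F :=
  sup_le hGF ((SimpleGraph.fromEdgeSet_le _).2 fun e he => hes e (List.mem_of_mem_take he.1))

theorem val_lt_of_pair_subset_isClique [DecidableEq V] (hnodup : es.Nodup)
    (hnew : ∀ e ∈ es, e ∉ G.edgeSet) {j : Fin es.length} {a b : V} (hj : es.get j = s(a, b))
    (hab : a ≠ b) {k : ℕ} {t : Finset V} (ht : (saturationStage G es k).IsClique (t : Set V))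
    (hsub : {a, b} ⊆ t) : (j : ℕ) < k := by
  rcases ht (hsub (by simp)) (hsub (by simp)) hab with hG | ⟨hk, -⟩
  · exact absurd (hj ▸ hG : es.get j ∈ G.edgeSet) (hnew _ (List.get_mem es j))
  · exact (hnodup.get_mem_take_iff j).1 (hj ▸ hk)

theorem isClique_of_mem_faces_of_forall_not_subset [DecidableEq V] {L : SComplex V}
    (hes : ∀ e ∈ L.skel1.edgeSet \ G.edgeSet, e ∈ es) {x y : Fin es.length → V}
    (hxy : ∀ j, es.get j = s(x j, y j)) {ρ : Finset V} (hρ : ρ ∈ L.faces)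
    (hfree : ∀ j, ¬{x j, y j} ⊆ ρ) : G.IsClique (ρ : Set V) := by
  intro a ha b hb hab
  by_contra hG
  have habρ : {a, b} ⊆ ρ := Finset.insert_subset_iff.2 ⟨ha, Finset.singleton_subset_iff.2 hb⟩
  have hL : L.skel1.Adj a b := ⟨hab, L.down_closed ρ hρ {a, b} habρ (by simp)⟩
  obtain ⟨j, hj⟩ := List.mem_iff_get.1 (hes s(a, b) ⟨hL, hG⟩)
  have hpair := congrArg Sym2.toFinset ((hxy j).symm.trans hj)
  simp only [Sym2.toFinset_mk_eq] at hpair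
  exact hfree j (hpair ▸ habρ)

theorem mem_deletion_range_pair_iff [DecidableEq V] {L M : SComplex V}
    (hvert : ∀ v : V, ({v} : Finset V) ∈ L.faces) (hGL : G ≤ L.skel1)
    (hes : ∀ e, e ∈ es ↔ e ∈ L.skel1.edgeSet \ G.edgeSet) {x y : Fin es.length → V}
    (hxy : ∀ j, es.get j = s(x j, y j)) (hne : ∀ j, x j ≠ y j) {θ : Fin es.length → Finset V}
    (hM : ∀ ρ, ρ ∈ M.faces ↔ (ρ ∈ L.faces ∧ ρ.card ≤ 2) ∨ ∃ i, ρ = θ i)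
    (hθ : ∀ i, {x i, y i} ⊆ θ i) {ρ : Finset V} :
    ρ ∈ (M.deletion (Set.range fun j => {x j, y j})).faces ↔
      (∃ v, ρ = {v}) ∨ ∃ u v, G.Adj u v ∧ ρ = {u, v} := by
  rw [SComplex.mem_deletion, hM, Set.forall_mem_range,
    SimpleGraph.exists_eq_singleton_or_adj_iff]
  constructor
  · rintro ⟨⟨hρL, hρ2⟩ | ⟨i, rfl⟩, hfree⟩
    · exact ⟨L.nonempty_mem ρ hρL, hρ2, isClique_of_mem_faces_of_forall_not_subset
        (fun e he => (hes e).2 he) hxy hρL hfree⟩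
    · exact absurd (hθ i) (hfree i)
  · rintro ⟨hρ, hcard, hGρ⟩
    refine ⟨Or.inl ⟨L.mem_faces_of_isClique hvert hρ hcard (hGρ.mono hGL), hcard⟩,
      fun j hsub => ((hes _).1 (List.get_mem es j)).2 ?_⟩
    rw [hxy j]
    exact hGρ (hsub (Finset.mem_insert_self _ _))
      (hsub (Finset.mem_insert_of_mem (Finset.mem_singleton_self _))) (hne j)

end SaturationStage

theorem theta_injective_and_collapsesTo_tree_general {V : Type*} [DecidableEq V]
    (L : SComplex V) (hvert : ∀ v : V, ({v} : Finset V) ∈ L.faces)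
    (G : SimpleGraph V)
    (es : List (Sym2 V)) (hwit : WitnessesWeakK3Sat L.skel1 G es)
    (x y z : Fin es.length → V)
    (htri : ∀ i : Fin es.length,
      es.get i = s(x i, y i) ∧
      (G ⊔ SimpleGraph.fromEdgeSet {e | e ∈ es.take (i.val + 1)}).Adj (x i) (y i) ∧
      (G ⊔ SimpleGraph.fromEdgeSet {e | e ∈ es.take (i.val + 1)}).Adj (y i) (z i) ∧
      (G ⊔ SimpleGraph.fromEdgeSet {e | e ∈ es.take (i.val + 1)}).Adj (z i) (x i))
    (θ : Fin es.length → Finset V)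
    (hθ : ∀ i : Fin es.length, θ i = ({x i, y i, z i} : Finset V)) :
    Function.Injective θ ∧
    ∃ M GC : SComplex V,
      (∀ ρ, ρ ∈ M.faces ↔ ((ρ ∈ L.faces ∧ ρ.card ≤ 2) ∨ ∃ i : Fin es.length, ρ = θ i)) ∧
      (∀ ρ, ρ ∈ GC.faces ↔
        ((∃ v : V, ρ = {v}) ∨ ∃ u v : V, G.Adj u v ∧ ρ = ({u, v} : Finset V))) ∧
      M.CollapsesTo GC := by
  obtain ⟨hGL, hnodup, hes, -⟩ := hwit
  have hnewG : ∀ e ∈ es, e ∉ G.edgeSet := fun e he => ((hes e).1 he).2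
  have hclique : ∀ i : Fin es.length, (saturationStage G es (i + 1)).IsClique (θ i : Set V) := by
    intro i
    obtain ⟨-, hxy, hyz, hzx⟩ := htri i
    rw [hθ i]
    exact (SimpleGraph.is3Clique_triple_iff.2 ⟨hxy, hzx.symm, hyz⟩).1
  have hedge_ssubset : ∀ i, ({x i, y i} : Finset V) ⊂ θ i := fun i =>
    hθ i ▸ Finset.pair_ssubset_triple (htri i).2.2.2.ne (htri i).2.2.1.ne.symm
  have hord : ∀ i j, ({x j, y j} : Finset V) ⊆ θ i → j ≤ i := fun i j h =>
    Nat.lt_succ_iff.1 <|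
      val_lt_of_pair_subset_isClique hnodup hnewG (htri j).1 (htri j).2.1.ne (hclique i) h
  refine ⟨fun i j h => le_antisymm (hord j i (h ▸ (hedge_ssubset i).subset))
    (hord i j (h ▸ (hedge_ssubset j).subset)), ?_⟩
  obtain ⟨M, hM⟩ := L.exists_faces_iff_skeleton_one_or_eq hvert θ fun i =>
    ⟨(Finset.insert_nonempty _ _).mono (hedge_ssubset i).subset, hθ i ▸ Finset.card_le_three,
      (hclique i).mono (saturationStage_le hGL (fun e he => ((hes e).1 he).1) _)⟩
  refine ⟨M, M.deletion (Set.range fun j => {x j, y j}), hM,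
    fun ρ => mem_deletion_range_pair_iff hvert hGL hes (fun j => (htri j).1)
      (fun j => (htri j).2.1.ne) hM fun i => (hedge_ssubset i).subset,
    M.collapsesTo_deletion_range _ θ (fun j => by simp) hedge_ssubset
      (fun j => (hM _).2 (Or.inr ⟨j, rfl⟩)) hord fun j ρ hρ hτρ => ?_⟩
  rcases (hM ρ).1 hρ with ⟨-, hρ2⟩ | hθρ
  · refine Or.inl (Finset.eq_of_subset_of_card_le hτρ ?_).symm
    rwa [Finset.card_pair (htri j).2.1.ne]
  · exact Or.inr hθρ

/-- Let `L` be a finite pure 2-dimensional flag complex, `G` a spanning tree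
of `L⁽¹⁾` weakly `K₃`-saturated in `L⁽¹⁾` with witnessing edge sequence `es`, and for each
`i` let `θ i = {x i, y i, z i}` be the 2-face of `L` induced by the vertex set of the copy
of `K₃` created at step `i`. Then the `θ i` are pairwise distinct, and the subcomplex of
`L` consisting of all vertices and edges of `L` together with the `θ i` collapses to `G`. -/
theorem theta_injective_and_collapsesTo_tree {V : Type*} [Fintype V] [DecidableEq V]
    (L : SComplex V) (hvert : ∀ v : V, ({v} : Finset V) ∈ L.faces)
    (hpure : L.PureDim 2) (hflag : L.Flag)
    (G : SimpleGraph V) (hGtree : G.IsTree)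
    (es : List (Sym2 V)) (hwit : WitnessesWeakK3Sat L.skel1 G es)
    (x y z : Fin es.length → V)
    (htri : ∀ i : Fin es.length,
      es.get i = s(x i, y i) ∧
      (G ⊔ SimpleGraph.fromEdgeSet {e | e ∈ es.take (i.val + 1)}).Adj (x i) (y i) ∧
      (G ⊔ SimpleGraph.fromEdgeSet {e | e ∈ es.take (i.val + 1)}).Adj (y i) (z i) ∧
      (G ⊔ SimpleGraph.fromEdgeSet {e | e ∈ es.take (i.val + 1)}).Adj (z i) (x i))
    (θ : Fin es.length → Finset V)
    (hθ : ∀ i : Fin es.length, θ i = ({x i, y i, z i} : Finset V)) :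
    Function.Injective θ ∧
    ∃ M GC : SComplex V,
      (∀ ρ, ρ ∈ M.faces ↔ ((ρ ∈ L.faces ∧ ρ.card ≤ 2) ∨ ∃ i : Fin es.length, ρ = θ i)) ∧
      (∀ ρ, ρ ∈ GC.faces ↔
        ((∃ v : V, ρ = {v}) ∨ ∃ u v : V, G.Adj u v ∧ ρ = ({u, v} : Finset V))) ∧
      M.CollapsesTo GC :=
  theta_injective_and_collapsesTo_tree_general L hvert G es hwit x y z htri θ hθ
end
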